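/- Let K ⊂ ℝ³ be the closure of a nonempty bounded open set with ℝ³ \ K connected, and let L > 0. Suppose h is continuous on ℝ³ \ int(K), harmonic on ℝ³ \ K, h = 0 on ∂K, and lim_{|x|→∞} h(x) = −L, and suppose the limit c = lim_{|x|→∞} |x|·(h(x) + L) exists. Then c > 0. -/

import Mathlib

open Real Filter MeasureTheory

/-- The Euclidean Laplacian of `f : ℝⁿ → ℝ`, as the sum of the pure second
partial derivatives in the coordinate directions. -/
noncomputable def laplacian {n : ℕ} (f : EuclideanSpace ℝ (Fin n) → ℝ)
    (x : EuclideanSpace ℝ (Fin n)) : ℝ :=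
  ∑ i : Fin n,
    fderiv ℝ (fun y => fderiv ℝ f y (EuclideanSpace.single i (1 : ℝ))) x
      (EuclideanSpace.single i (1 : ℝ))

section secondderiv

variable {n : ℕ}

local notation "E" => EuclideanSpace ℝ (Fin n)

/-- At a local max of a C² function, each pure second coordinate derivative is ≤ 0. -/
lemma second_deriv_nonpos_of_isLocalMax {f : E → ℝ} {x : E}
    (hf : ContDiffAt ℝ 2 f x) (hmax : IsLocalMax f x) (i : Fin n) :
    fderiv ℝ (fun y => fderiv ℝ f y (EuclideanSpace.single i (1 : ℝ))) x
      (EuclideanSpace.single i (1 : ℝ)) ≤ 0 := by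
  by_contra hd
  push_neg at hd
  set e : E := EuclideanSpace.single i (1 : ℝ) with he
  set d : ℝ := fderiv ℝ (fun y => fderiv ℝ f y e) x e with hdd
  -- a neighborhood where f is C²
  obtain ⟨u, hu_mem, hu⟩ := hf.contDiffOn le_rfl (by norm_num)
  obtain ⟨u', hu'sub, hu'open, hxu'⟩ := mem_nhds_iff.mp hu_mem
  have hu' : ContDiffOn ℝ 2 f u' := hu.mono hu'sub
  -- the line γ t = x + t • e
  set γ : ℝ → E := fun t => x + t • e with hγ
  have hγcont : Continuous γ := by continuity
  have hγ0 : γ 0 = x := by simp [hγ]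
  have hγd : ∀ t : ℝ, HasDerivAt γ e t := by
    intro t
    have := ((hasDerivAt_id t).smul_const e).const_add x
    simp only [one_smul] at this
    exact this
  -- δ-interval mapping into u'
  obtain ⟨δ, hδpos, hδ⟩ : ∃ δ > 0, ∀ t : ℝ, |t| < δ → γ t ∈ u' := by
    have : γ ⁻¹' u' ∈ nhds (0 : ℝ) := by
      apply hγcont.continuousAt.preimage_mem_nhds
      rw [hγ0]; exact hu'open.mem_nhds hxu'
    rcases Metric.mem_nhds_iff.mp this with ⟨δ, hδpos, hδ⟩
    exact ⟨δ, hδpos, fun t ht => hδ (by simpa [Real.dist_eq] using ht)⟩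
  -- g = f ∘ γ, ψ t = directional derivative of f at γ t
  set g : ℝ → ℝ := fun t => f (γ t) with hg
  set ψ : ℝ → ℝ := fun t => fderiv ℝ f (γ t) e with hψ
  have hdiff : ∀ t : ℝ, |t| < δ → DifferentiableAt ℝ f (γ t) := by
    intro t ht
    exact (hu'.differentiableOn (by norm_num)).differentiableAt
      (hu'open.mem_nhds (hδ t ht))
  have hgd : ∀ t : ℝ, |t| < δ → HasDerivAt g (ψ t) t := by
    intro t ht
    exact ((hdiff t ht).hasFDerivAt).comp_hasDerivAt t (hγd t)
  -- local max of g at 0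
  have hgmax : IsLocalMax g 0 := by
    have hmax' : IsLocalMax f (γ 0) := by rwa [hγ0]
    exact hmax'.comp_continuous hγcont.continuousAt
  -- derivative of ψ at 0 is d
  have hΦ : DifferentiableAt ℝ (fun y => fderiv ℝ f y e) x := by
    have h1 : ContDiffAt ℝ 1 (fderiv ℝ f) x := hf.fderiv_right (by norm_num)
    exact (h1.differentiableAt one_ne_zero).clm_apply (differentiableAt_const e)
  have hψd : HasDerivAt ψ d 0 := by
    have h1 : HasFDerivAt (fun y => fderiv ℝ f y e)
        (fderiv ℝ (fun y => fderiv ℝ f y e) x) (γ 0) := by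
      rw [hγ0]; exact hΦ.hasFDerivAt
    exact h1.comp_hasDerivAt 0 (hγd 0)
  have hψ0 : ψ 0 = 0 := hgmax.hasDerivAt_eq_zero (hgd 0 (by simpa using hδpos))
  -- ψ is positive on a small right interval
  have hslope : Tendsto (slope ψ 0) (nhdsWithin 0 {(0:ℝ)}ᶜ) (nhds d) :=
    hasDerivAt_iff_tendsto_slope.mp hψd
  have hev : ∀ᶠ t in nhdsWithin (0:ℝ) (Set.Ioi 0), 0 < ψ t ∧ |t| < δ := by
    have h1 : ∀ᶠ t in nhdsWithin (0:ℝ) (Set.Ioi 0), 0 < slope ψ 0 t := by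
      apply (hslope.mono_left (nhdsWithin_mono _ ?_)).eventually (eventually_gt_nhds hd)
      intro t ht
      exact ne_of_gt ht
    have h2 : ∀ᶠ t in nhdsWithin (0:ℝ) (Set.Ioi 0), t ∈ Set.Ioi (0:ℝ) :=
      eventually_mem_nhdsWithin
    have h3 : ∀ᶠ t in nhdsWithin (0:ℝ) (Set.Ioi 0), |t| < δ := by
      apply eventually_nhdsWithin_of_eventually_nhds
      have : Continuous (fun t : ℝ => |t|) := continuous_abs
      have := this.continuousAt (x := (0:ℝ))
      exact this.eventually_lt_const (by simpa using hδpos)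
    filter_upwards [h1, h2, h3] with t h1t h2t h3t
    refine ⟨?_, h3t⟩
    have htpos : (0:ℝ) < t := h2t
    have : slope ψ 0 t = ψ t / t := by simp [slope_def_field, hψ0]
    rw [this] at h1t
    have := mul_pos h1t htpos
    rwa [div_mul_cancel₀ _ (ne_of_gt htpos)] at this
  obtain ⟨u0, hu0, hIoo⟩ := mem_nhdsGT_iff_exists_Ioo_subset.mp hev
  have hu0pos : (0:ℝ) < u0 := hu0
  -- g is strictly increasing on [0, t₁]
  set t₁ : ℝ := min u0 δ / 2 with ht₁
  have ht₁pos : 0 < t₁ := by positivity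
  have ht₁u : t₁ < u0 := by
    have : min u0 δ ≤ u0 := min_le_left _ _
    linarith [lt_min hu0pos hδpos]
  have ht₁δ : t₁ < δ := by
    have : min u0 δ ≤ δ := min_le_right _ _
    linarith [lt_min hu0pos hδpos]
  have hmono : StrictMonoOn g (Set.Icc 0 t₁) := by
    apply strictMonoOn_of_deriv_pos (convex_Icc _ _)
    · intro t ht
      have htδ : |t| < δ := by
        rw [abs_lt]; constructor <;> [linarith [ht.1]; linarith [ht.2]]
      exact ((hgd t htδ).continuousAt).continuousWithinAt
    · intro t ht
      rw [interior_Icc] at ht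
      have htδ : |t| < δ := by
        rw [abs_lt]; constructor <;> [linarith [ht.1]; linarith [ht.2]]
      rw [(hgd t htδ).deriv]
      exact (hIoo ⟨ht.1, lt_trans ht.2 ht₁u⟩).1
  -- contradiction with local max
  obtain ⟨ε, hεpos, hε⟩ := Metric.eventually_nhds_iff.mp hgmax
  set t₂ : ℝ := min t₁ (ε / 2) with ht₂
  have ht₂pos : 0 < t₂ := lt_min ht₁pos (by positivity)
  have h1 : g 0 < g t₂ :=
    hmono (by constructor <;> simp [le_of_lt ht₁pos]) 
      ⟨le_of_lt ht₂pos, min_le_left _ _⟩ ht₂pos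
  have h2 : g t₂ ≤ g 0 := hε (by
    rw [Real.dist_eq, sub_zero, abs_of_pos ht₂pos]
    calc t₂ ≤ ε / 2 := min_le_right _ _
    _ < ε := by linarith)
  linarith

end secondderiv

section lap

variable {n : ℕ}

local notation "E" => EuclideanSpace ℝ (Fin n)

lemma laplacian_comb {f g : E → ℝ} {x : E}
    (hf : ContDiffAt ℝ 2 f x) (hg : ContDiffAt ℝ 2 g x) (a b : ℝ) :
    laplacian (fun y => a * f y + b * g y) x = a * laplacian f x + b * laplacian g x := by
  have key : ∀ i : Fin n,
      fderiv ℝ (fun y => fderiv ℝ (fun z => a * f z + b * g z) y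
        (EuclideanSpace.single i (1:ℝ))) x (EuclideanSpace.single i (1:ℝ))
      = a * fderiv ℝ (fun y => fderiv ℝ f y (EuclideanSpace.single i (1:ℝ))) x
            (EuclideanSpace.single i (1:ℝ))
        + b * fderiv ℝ (fun y => fderiv ℝ g y (EuclideanSpace.single i (1:ℝ))) x
            (EuclideanSpace.single i (1:ℝ)) := by
    intro i
    set e : E := EuclideanSpace.single i (1:ℝ) with he
    -- neighborhood where f and g are differentiable
    obtain ⟨uf, huf_mem, huf⟩ := hf.contDiffOn le_rfl (by norm_num)
    obtain ⟨ug, hug_mem, hug⟩ := hg.contDiffOn le_rfl (by norm_num)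
    have hUmem : interior uf ∩ interior ug ∈ nhds x :=
      Filter.inter_mem (interior_mem_nhds.mpr huf_mem) (interior_mem_nhds.mpr hug_mem)
    have hdf : ∀ y ∈ interior uf ∩ interior ug, DifferentiableAt ℝ f y := fun y hy =>
      ((huf.mono interior_subset).differentiableOn (by norm_num)).differentiableAt
        (isOpen_interior.mem_nhds hy.1)
    have hdg : ∀ y ∈ interior uf ∩ interior ug, DifferentiableAt ℝ g y := fun y hy =>
      ((hug.mono interior_subset).differentiableOn (by norm_num)).differentiableAt
        (isOpen_interior.mem_nhds hy.2)
    have heq : (fun y => fderiv ℝ (fun z => a * f z + b * g z) y e)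
        =ᶠ[nhds x] (fun y => a * fderiv ℝ f y e + b * fderiv ℝ g y e) := by
      filter_upwards [hUmem] with y hy
      have h1 : HasFDerivAt (fun z => a * f z + b * g z)
          (a • fderiv ℝ f y + b • fderiv ℝ g y) y := by
        exact (((hdf y hy).hasFDerivAt.const_mul a).add
          ((hdg y hy).hasFDerivAt.const_mul b))
      rw [h1.fderiv]
      simp
    rw [heq.fderiv_eq]
    have hΦf : DifferentiableAt ℝ (fun y => fderiv ℝ f y e) x :=
      ((hf.fderiv_right (m := 1) (by norm_num)).differentiableAt one_ne_zero).clm_apply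
        (differentiableAt_const e)
    have hΦg : DifferentiableAt ℝ (fun y => fderiv ℝ g y e) x :=
      ((hg.fderiv_right (m := 1) (by norm_num)).differentiableAt one_ne_zero).clm_apply
        (differentiableAt_const e)
    rw [fderiv_fun_add ((hΦf.const_mul a)) ((hΦg.const_mul b)),
      fderiv_const_mul hΦf, fderiv_const_mul hΦg]
    simp
  unfold laplacian
  rw [Finset.mul_sum, Finset.mul_sum, ← Finset.sum_add_distrib]
  exact Finset.sum_congr rfl fun i _ => key i

lemma not_isLocalMax_of_laplacian_pos {f : E → ℝ} {x : E}
    (hf : ContDiffAt ℝ 2 f x) (hlap : 0 < laplacian f x) : ¬ IsLocalMax f x := by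
  intro hmax
  have : laplacian f x ≤ 0 :=
    Finset.sum_nonpos fun i _ => second_deriv_nonpos_of_isLocalMax hf hmax i
  linarith

end lap

section qfun

variable {n : ℕ}

local notation "E" => EuclideanSpace ℝ (Fin n)

noncomputable def qfun : EuclideanSpace ℝ (Fin n) → ℝ := fun y => ∑ j, (y j)^2

lemma qfun_nonneg (y : E) : 0 ≤ qfun y :=
  Finset.sum_nonneg fun j _ => sq_nonneg _

lemma contDiff_qfun : ContDiff ℝ 2 (qfun (n := n)) := by
  apply ContDiff.sum
  intro j _
  exact ((EuclideanSpace.proj j : E →L[ℝ] ℝ).contDiff).pow 2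

lemma hasFDerivAt_qfun (y : E) :
    HasFDerivAt (qfun (n := n))
      (∑ j, (2 * y j) • (EuclideanSpace.proj j : E →L[ℝ] ℝ)) y := by
  apply HasFDerivAt.fun_sum
  intro j _
  have h1 : HasFDerivAt (fun z : E => z j) (EuclideanSpace.proj j : E →L[ℝ] ℝ) y :=
    (EuclideanSpace.proj j : E →L[ℝ] ℝ).hasFDerivAt
  have h2 := h1.mul h1
  have h3 : (fun z : E => z j ^ 2) = fun z : E => z j * z j := by
    funext z; ring
  rw [h3, two_mul, add_smul]
  exact h2

lemma laplacian_qfun (x : E) : laplacian (qfun (n := n)) x = 2 * n := by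
  unfold laplacian
  have key : ∀ i : Fin n,
      fderiv ℝ (fun y => fderiv ℝ (qfun (n := n)) y (EuclideanSpace.single i (1:ℝ))) x
        (EuclideanSpace.single i (1:ℝ)) = 2 := by
    intro i
    have heq : (fun y : E => fderiv ℝ (qfun (n := n)) y (EuclideanSpace.single i (1:ℝ)))
        = fun y : E => 2 * y i := by
      funext y
      rw [(hasFDerivAt_qfun y).fderiv]
      simp [EuclideanSpace.single_apply, Finset.sum_ite_eq', mul_ite]
    rw [heq]
    have h2 : HasFDerivAt (fun y : E => 2 * y i)
        ((2:ℝ) • (EuclideanSpace.proj i : E →L[ℝ] ℝ)) x :=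
      ((EuclideanSpace.proj i : E →L[ℝ] ℝ).hasFDerivAt).const_mul 2
    rw [h2.fderiv]
    simp [EuclideanSpace.single_apply]
  rw [Finset.sum_congr rfl fun i _ => key i]
  simp [mul_comm]

end qfun

section maxprin

variable {n : ℕ}

local notation "E" => EuclideanSpace ℝ (Fin n)

lemma weak_max_principle (hn : 0 < n) {s : Set E} (hs : IsOpen s)
    (hb : Bornology.IsBounded s) {w : E → ℝ}
    (hwc : ContinuousOn w (closure s)) (hw2 : ∀ x ∈ s, ContDiffAt ℝ 2 w x)
    (hlap : ∀ x ∈ s, laplacian w x = 0) {M : ℝ}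
    (hM : ∀ x ∈ frontier s, w x ≤ M) : ∀ x ∈ closure s, w x ≤ M := by
  intro x hx
  have hcs : IsCompact (closure s) :=
    Metric.isCompact_of_isClosed_isBounded isClosed_closure hb.closure
  have hq_cont : Continuous (qfun (n := n)) := contDiff_qfun.continuous
  obtain ⟨z0, hz0, hz0max⟩ := hcs.exists_isMaxOn ⟨x, hx⟩ hq_cont.continuousOn
  have hq0 : 0 ≤ qfun z0 := qfun_nonneg z0
  have key : ∀ ε > 0, w x ≤ M + ε * qfun z0 := by
    intro ε hε
    set W : E → ℝ := fun y => w y + ε * qfun y with hW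
    have hWc : ContinuousOn W (closure s) :=
      hwc.add ((continuous_const.mul hq_cont).continuousOn)
    obtain ⟨z, hz, hzmax⟩ := hcs.exists_isMaxOn ⟨x, hx⟩ hWc
    have hzf : z ∈ frontier s := by
      by_contra hzf
      have hzs : z ∈ s := by
        have h1 : frontier s = closure s \ interior s := rfl
        rw [hs.interior_eq] at h1
        by_contra hzs
        exact hzf (h1 ▸ ⟨hz, hzs⟩)
      have hlm : IsLocalMax W z := by
        filter_upwards [hs.mem_nhds hzs] with y hy using hzmax (subset_closure hy)
      refine not_isLocalMax_of_laplacian_pos ?_ ?_ hlm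
      · exact (hw2 z hzs).add (contDiffAt_const.mul contDiff_qfun.contDiffAt)
      · have hcomb := laplacian_comb (hw2 z hzs) (contDiff_qfun.contDiffAt) 1 ε
        have : laplacian W z = 1 * laplacian w z + ε * laplacian (qfun (n := n)) z := by
          rw [← hcomb]; simp only [hW, one_mul]
        rw [this, hlap z hzs, laplacian_qfun]
        have h2n : (0:ℝ) < 2 * n := by positivity
        nlinarith [mul_pos hε h2n]
    have h1 : W x ≤ W z := hzmax hx
    have h2 : w z ≤ M := hM z hzf
    have h3 : qfun z ≤ qfun z0 := hz0max hz
    have h4 : 0 ≤ qfun x := qfun_nonneg x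
    have h5 : W x = w x + ε * qfun x := rfl
    have h6 : W z = w z + ε * qfun z := rfl
    nlinarith
  by_contra hcon
  push_neg at hcon
  have hε : 0 < (w x - M) / (qfun z0 + 1) := by
    apply div_pos <;> linarith
  have hthis := key _ hε
  rw [div_mul_eq_mul_div] at hthis
  have h7 : (w x - M) * qfun z0 / (qfun z0 + 1) < w x - M := by
    rw [div_lt_iff₀ (by linarith)]
    nlinarith
  linarith

end maxprin

section vfun

local notation "E3" => EuclideanSpace ℝ (Fin 3)

noncomputable def Qf (p : E3) : EuclideanSpace ℝ (Fin 3) → ℝ := fun y => ∑ j, (y j - p j)^2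

noncomputable def vf (p : E3) (L a : ℝ) : EuclideanSpace ℝ (Fin 3) → ℝ :=
  fun y => -L + a * (Qf p y) ^ (-(1:ℝ)/2)

lemma Qf_eq_norm (p y : E3) : Qf p y = ‖y - p‖^2 := by
  rw [EuclideanSpace.norm_eq, Real.sq_sqrt (Finset.sum_nonneg fun j _ => sq_nonneg _)]
  unfold Qf
  congr 1
  funext j
  simp [PiLp.sub_apply, Real.norm_eq_abs, sq_abs]

lemma Qf_pos {p y : E3} (h : y ≠ p) : 0 < Qf p y := by
  rw [Qf_eq_norm]
  have h1 : y - p ≠ 0 := sub_ne_zero_of_ne h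
  exact pow_pos (norm_pos_iff.mpr h1) 2

lemma contDiff_Qf (p : E3) : ContDiff ℝ 2 (Qf p) := by
  apply ContDiff.sum
  intro j _
  exact (((EuclideanSpace.proj j : E3 →L[ℝ] ℝ).contDiff).sub contDiff_const).pow 2

lemma hasFDerivAt_Qf (p : E3) (y : E3) :
    HasFDerivAt (Qf p)
      (∑ j, (2 * (y j - p j)) • (EuclideanSpace.proj j : E3 →L[ℝ] ℝ)) y := by
  apply HasFDerivAt.fun_sum
  intro j _
  have h1 : HasFDerivAt (fun z : E3 => z j - p j)
      (EuclideanSpace.proj j : E3 →L[ℝ] ℝ) y :=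
    ((EuclideanSpace.proj j : E3 →L[ℝ] ℝ).hasFDerivAt).sub_const (p j)
  have h2 := h1.mul h1
  have h3 : (fun z : E3 => (z j - p j) ^ 2) = fun z : E3 => (z j - p j) * (z j - p j) := by
    funext z; ring
  rw [h3, two_mul, add_smul]
  exact h2

lemma contDiffAt_vf {p : E3} (L a : ℝ) {y : E3} (h : y ≠ p) :
    ContDiffAt ℝ 2 (vf p L a) y := by
  apply ContDiffAt.add contDiffAt_const
  apply ContDiffAt.mul contDiffAt_const
  exact (Real.contDiffAt_rpow_const_of_ne (ne_of_gt (Qf_pos h))).comp y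
    (contDiff_Qf p).contDiffAt

lemma hasFDerivAt_vf (p : E3) (L a : ℝ) {y : E3} (h : y ≠ p) :
    HasFDerivAt (vf p L a)
      ((a * (-(1:ℝ)/2 * Qf p y ^ (-(1:ℝ)/2 - 1))) •
        (∑ j, (2 * (y j - p j)) • (EuclideanSpace.proj j : E3 →L[ℝ] ℝ))) y := by
  have h1 : HasDerivAt (fun s : ℝ => s ^ (-(1:ℝ)/2))
      (-(1:ℝ)/2 * Qf p y ^ (-(1:ℝ)/2 - 1)) (Qf p y) :=
    Real.hasDerivAt_rpow_const (Or.inl (ne_of_gt (Qf_pos h)))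
  have h2 := h1.comp_hasFDerivAt y (hasFDerivAt_Qf p y)
  have h3 := (h2.const_mul a).const_add (-L)
  unfold vf
  rw [smul_smul] at h3
  exact h3

end vfun

section vharm

local notation "E3" => EuclideanSpace ℝ (Fin 3)

lemma apply_single_sum (p y : E3) (i : Fin 3) :
    (∑ j, (2 * (y j - p j)) • (EuclideanSpace.proj j : E3 →L[ℝ] ℝ))
      (EuclideanSpace.single i (1:ℝ)) = 2 * (y i - p i) := by
  rw [ContinuousLinearMap.sum_apply]
  have : ∀ j : Fin 3, ((2 * (y j - p j)) • (EuclideanSpace.proj j : E3 →L[ℝ] ℝ))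
      (EuclideanSpace.single i (1:ℝ))
      = if j = i then 2 * (y j - p j) else 0 := by
    intro j
    rw [ContinuousLinearMap.smul_apply]
    simp [EuclideanSpace.single_apply]
  rw [Finset.sum_congr rfl fun j _ => this j]
  simp

end vharm

lemma laplacian_vf (p : EuclideanSpace ℝ (Fin 3)) (L a : ℝ)
    {x : EuclideanSpace ℝ (Fin 3)} (hx : x ≠ p) : laplacian (vf p L a) x = 0 := by
  have hs : 0 < Qf p x := Qf_pos hx
  set s : ℝ := Qf p x with hsdef
  set A : ℝ := s ^ (-(3:ℝ)/2) with hA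
  set B : ℝ := s ^ (-(3:ℝ)/2 - 1) with hB
  set G : Fin 3 → EuclideanSpace ℝ (Fin 3) → ℝ :=
    fun i y => (-a) * ((y i - p i) * Qf p y ^ (-(3:ℝ)/2)) with hG
  have key : ∀ i : Fin 3,
      fderiv ℝ (fun y => fderiv ℝ (vf p L a) y (EuclideanSpace.single i (1:ℝ))) x
        (EuclideanSpace.single i (1:ℝ))
      = (-a) * (A - 3 * B * (x i - p i)^2) := by
    intro i
    have step1 : (fun y => fderiv ℝ (vf p L a) y (EuclideanSpace.single i (1:ℝ)))
        =ᶠ[nhds x] G i := by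
      filter_upwards [isOpen_compl_singleton.mem_nhds
        (Set.mem_compl_singleton_iff.mpr hx)] with y hy
      have hy' : y ≠ p := hy
      rw [(hasFDerivAt_vf p L a hy').fderiv, ContinuousLinearMap.smul_apply,
        apply_single_sum]
      have he : (-(1:ℝ)/2 - 1) = (-(3:ℝ)/2) := by norm_num
      rw [he, hG]
      simp only [smul_eq_mul]
      ring
    have h1 : HasFDerivAt (fun y : EuclideanSpace ℝ (Fin 3) => y i - p i)
        (EuclideanSpace.proj i : EuclideanSpace ℝ (Fin 3) →L[ℝ] ℝ) x :=
      ((EuclideanSpace.proj i : EuclideanSpace ℝ (Fin 3) →L[ℝ] ℝ).hasFDerivAt).sub_const (p i)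
    have h2 : HasFDerivAt (fun y : EuclideanSpace ℝ (Fin 3) => Qf p y ^ (-(3:ℝ)/2))
        ((-(3:ℝ)/2 * s ^ (-(3:ℝ)/2 - 1)) •
          (∑ j, (2 * (x j - p j)) • (EuclideanSpace.proj j :
            EuclideanSpace ℝ (Fin 3) →L[ℝ] ℝ))) x :=
      by have := (Real.hasDerivAt_rpow_const (p := -(3:ℝ)/2)
           (Or.inl (ne_of_gt hs))).comp_hasFDerivAt x (hasFDerivAt_Qf p x); exact this
    have h3 : HasFDerivAt (G i) _ x := (h1.mul h2).const_mul (-a)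
    rw [step1.fderiv_eq, h3.fderiv]
    rw [ContinuousLinearMap.smul_apply, ContinuousLinearMap.add_apply,
      ContinuousLinearMap.smul_apply, ContinuousLinearMap.smul_apply,
      apply_single_sum, ContinuousLinearMap.smul_apply]
    have hproj : (EuclideanSpace.proj i : EuclideanSpace ℝ (Fin 3) →L[ℝ] ℝ)
        (EuclideanSpace.single i (1:ℝ)) = 1 := by
      simp [EuclideanSpace.single_apply]
    rw [hproj]
    simp only [smul_eq_mul, ← hsdef, ← hA, ← hB]
    ring
  unfold laplacian
  rw [Finset.sum_congr rfl fun i _ => key i]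
  have expand : ∑ i : Fin 3, (-a) * (A - 3 * B * (x i - p i) ^ 2)
      = -a * (3 * A - 3 * B * (∑ i : Fin 3, (x i - p i) ^ 2)) := by
    rw [← Finset.mul_sum, Finset.sum_sub_distrib, Finset.sum_const, ← Finset.mul_sum]
    simp only [Finset.card_univ, Fintype.card_fin, nsmul_eq_mul, Nat.cast_ofNat]
  rw [expand]
  have hQsum : ∑ i : Fin 3, (x i - p i) ^ 2 = s := rfl
  rw [hQsum]
  have hkey : s * B = A := by
    rw [hA, hB, ← Real.rpow_one_add' hs.le (by norm_num : (1:ℝ) + (-(3:ℝ)/2 - 1) ≠ 0)]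
    norm_num
  linear_combination (3 * a) * hkey

section helpers

local notation "E3" => EuclideanSpace ℝ (Fin 3)

lemma laplacian_sub {n : ℕ} {f g : EuclideanSpace ℝ (Fin n) → ℝ}
    {x : EuclideanSpace ℝ (Fin n)}
    (hf : ContDiffAt ℝ 2 f x) (hg : ContDiffAt ℝ 2 g x) :
    laplacian (fun y => f y - g y) x = laplacian f x - laplacian g x := by
  have := laplacian_comb hf hg 1 (-1)
  simp only [one_mul, neg_one_mul, ← sub_eq_add_neg] at this
  exact this

lemma vf_eq {p y : E3} (L a : ℝ) (h : y ≠ p) :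
    vf p L a y = -L + a * ‖y - p‖⁻¹ := by
  unfold vf
  rw [Qf_eq_norm]
  have : (‖y - p‖^2 : ℝ) ^ (-(1:ℝ)/2) = ‖y - p‖⁻¹ := by
    rw [← Real.rpow_natCast ‖y - p‖ 2, ← Real.rpow_mul (norm_nonneg _)]
    norm_num [Real.rpow_neg_one]
  rw [this]

lemma tendsto_norm_sub_cocompact (p : E3) :
    Tendsto (fun y : E3 => ‖y - p‖) (Filter.cocompact _) atTop := by
  have h0 : Tendsto (fun y : E3 => ‖y‖ + -‖p‖) (Filter.cocompact _) atTop :=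
    tendsto_atTop_add_const_right _ _ tendsto_norm_cocompact_atTop
  apply tendsto_atTop_mono _ h0
  intro y
  have := norm_sub_norm_le y (y - p)
  have h2 : y - (y - p) = p := by abel
  rw [h2] at this
  simp only [ge_iff_le]
  linarith [this]

lemma tendsto_inv_norm_sub (p : E3) :
    Tendsto (fun y : E3 => ‖y - p‖⁻¹) (Filter.cocompact _) (nhds 0) :=
  tendsto_inv_atTop_zero.comp (tendsto_norm_sub_cocompact p)

lemma eventually_ne_cocompact (p : E3) :
    ∀ᶠ y in Filter.cocompact E3, y ≠ p := by
  filter_upwards [isCompact_singleton.compl_mem_cocompact (s := {p})] with y hy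
  exact hy

lemma tendsto_vf_cocompact (p : E3) (L a : ℝ) :
    Tendsto (vf p L a) (Filter.cocompact _) (nhds (-L)) := by
  have h1 : Tendsto (fun y : E3 => -L + a * ‖y - p‖⁻¹) (Filter.cocompact _)
      (nhds (-L + a * 0)) :=
    tendsto_const_nhds.add ((tendsto_inv_norm_sub p).const_mul a)
  rw [mul_zero, add_zero] at h1
  apply h1.congr'
  filter_upwards [eventually_ne_cocompact p] with y hy
  exact (vf_eq L a hy).symm

lemma tendsto_ratio (p : E3) :
    Tendsto (fun y : E3 => ‖y‖ * ‖y - p‖⁻¹) (Filter.cocompact _) (nhds 1) := by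
  have h0 : Tendsto (fun y : E3 => (‖y‖ * ‖y - p‖⁻¹ - 1)) (Filter.cocompact _) (nhds 0) := by
    apply squeeze_zero_norm' (a := fun y : E3 => ‖p‖ * ‖y - p‖⁻¹)
    · filter_upwards [eventually_ne_cocompact p] with y hy
      have hpos : 0 < ‖y - p‖ := norm_pos_iff.mpr (sub_ne_zero_of_ne hy)
      have h1 : ‖y‖ * ‖y - p‖⁻¹ - 1 = (‖y‖ - ‖y - p‖) * ‖y - p‖⁻¹ := by
        field_simp
      rw [Real.norm_eq_abs, h1, abs_mul, abs_inv, abs_norm]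
      apply mul_le_mul_of_nonneg_right _ (inv_nonneg.mpr (norm_nonneg _))
      have := abs_norm_sub_norm_le y (y - p)
      have h2 : y - (y - p) = p := by abel
      rwa [h2] at this
    · simpa using (tendsto_inv_norm_sub p).const_mul ‖p‖
  have := h0.add (tendsto_const_nhds (x := (1:ℝ)))
  simpa using this

end helpers

/-- If `h` is harmonic outside `K`, vanishes on `∂K`, tends to `-L < 0` at infinity, and
has an expansion `h(x) = -L + c/|x| + o(1/|x|)` at infinity, then the expansion
coefficient `c` is strictly positive. -/
theorem exterior_expansion_coeff_pos
    (K : Set (EuclideanSpace ℝ (Fin 3))) (L c : ℝ) (hL : 0 < L)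
    (hK : ∃ U : Set (EuclideanSpace ℝ (Fin 3)),
      U.Nonempty ∧ IsOpen U ∧ Bornology.IsBounded U ∧ K = closure U)
    (hconn : IsConnected Kᶜ)
    (h : EuclideanSpace ℝ (Fin 3) → ℝ)
    (hcont : ContinuousOn h (interior K)ᶜ)
    (hreg : ContDiffOn ℝ 2 h Kᶜ)
    (hharm : ∀ x ∉ K, laplacian h x = 0)
    (hbdry : ∀ x ∈ frontier K, h x = 0)
    (hlim : Tendsto h (cocompact (EuclideanSpace ℝ (Fin 3))) (nhds (-L)))
    (hc : Tendsto (fun x : EuclideanSpace ℝ (Fin 3) => ‖x‖ * (h x + L))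
      (cocompact (EuclideanSpace ℝ (Fin 3))) (nhds c)) :
    0 < c := by
  obtain ⟨U, hUne, hUopen, hUbdd, hKU⟩ := hK
  obtain ⟨p, hpU⟩ := hUne
  obtain ⟨ρ, hρpos, hball⟩ := Metric.isOpen_iff.mp hUopen p hpU
  have hUK : U ⊆ K := hKU ▸ subset_closure
  have hUint : U ⊆ interior K := hUopen.subset_interior_iff.mpr hUK
  have hpK : p ∈ K := hUK hpU
  have hKclosed : IsClosed K := hKU ▸ isClosed_closure
  have hKbdd : Bornology.IsBounded K := hKU ▸ hUbdd.closure
  have hKcomp : IsCompact K := Metric.isCompact_of_isClosed_isBounded hKclosed hKbdd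
  set a : ℝ := L * ρ with ha
  have hapos : 0 < a := mul_pos hL hρpos
  set v : EuclideanSpace ℝ (Fin 3) → ℝ := vf p L a with hv
  -- points outside `interior K` are `≠ p`
  have hnep : ∀ y ∈ (interior K)ᶜ, y ≠ p := by
    intro y hy he
    exact hy (he ▸ hUint hpU)
  -- v ≤ 0 on the frontier of K
  have hfr : ∀ x ∈ frontier K, ρ ≤ ‖x - p‖ := by
    intro x hxf
    by_contra hlt
    push_neg at hlt
    have hxb : x ∈ Metric.ball p ρ := by
      rw [Metric.mem_ball, dist_eq_norm]; exact hlt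
    have hxint : x ∈ interior K := hUint (hball hxb)
    rw [hKclosed.frontier_eq] at hxf
    exact hxf.2 hxint
  have hvfr : ∀ x ∈ frontier K, v x ≤ 0 := by
    intro x hxf
    have hxp : x ≠ p := by
      intro he
      have := hfr x hxf
      rw [he, sub_self, norm_zero] at this
      linarith
    rw [hv, vf_eq L a hxp]
    have hnrm : 0 < ‖x - p‖ := norm_pos_iff.mpr (sub_ne_zero_of_ne hxp)
    have hinv : ‖x - p‖⁻¹ ≤ ρ⁻¹ := inv_anti₀ hρpos (hfr x hxf)
    have h1 : a * ‖x - p‖⁻¹ ≤ a * ρ⁻¹ := mul_le_mul_of_nonneg_left hinv hapos.le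
    have h2 : a * ρ⁻¹ = L := by
      rw [ha, mul_assoc, mul_inv_cancel₀ hρpos.ne', mul_one]
    linarith
  -- comparison : v ≤ h outside K
  have hcomp : ∀ x ∉ K, v x ≤ h x := by
    have hstep : ∀ ε > 0, ∀ x ∉ K, v x ≤ h x + ε := by
      intro ε hε x hxK
      -- v - h tends to 0 at infinity
      have hvh0 : Tendsto (fun y => v y - h y) (cocompact (EuclideanSpace ℝ (Fin 3)))
          (nhds 0) := by
        have := (tendsto_vf_cocompact p L a).sub hlim
        simpa using this
      have hsmall : {y | |v y - h y| < ε} ∈ cocompact (EuclideanSpace ℝ (Fin 3)) := by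
        have := hvh0 (Metric.ball_mem_nhds (0:ℝ) hε)
        filter_upwards [this] with y hy
        simpa [Real.dist_eq] using hy
      obtain ⟨C, hCcomp, hCsub⟩ := Filter.mem_cocompact.mp hsmall
      obtain ⟨R0, hR0⟩ := (hKcomp.union hCcomp).isBounded.subset_ball 0
      set R : ℝ := max R0 1 with hR
      have hRpos : (0:ℝ) < R := lt_of_lt_of_le one_pos (le_max_right _ _)
      have hKC : K ∪ C ⊆ Metric.ball 0 R :=
        hR0.trans (Metric.ball_subset_ball (le_max_left _ _))
      set sdom : Set (EuclideanSpace ℝ (Fin 3)) := Kᶜ ∩ Metric.ball 0 R with hsdom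
      have hsopen : IsOpen sdom := hKclosed.isOpen_compl.inter Metric.isOpen_ball
      have hsbdd : Bornology.IsBounded sdom :=
        Metric.isBounded_ball.subset Set.inter_subset_right
      -- closure of sdom avoids interior K
      have hclos : closure sdom ⊆ (interior K)ᶜ := by
        have h1 : sdom ⊆ (interior K)ᶜ := by
          intro y hy
          exact fun hy2 => hy.1 (interior_subset hy2)
        exact closure_minimal h1 (isOpen_interior.isClosed_compl)
      set w : EuclideanSpace ℝ (Fin 3) → ℝ := fun y => v y - h y with hw
      have hmaxp : ∀ y ∈ closure sdom, w y ≤ ε := by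
        apply weak_max_principle (n := 3) (by norm_num) hsopen hsbdd
        · -- continuity on closure
          intro y hy
          have hy' : y ∈ (interior K)ᶜ := hclos hy
          have hyp : y ≠ p := hnep y hy'
          exact ((contDiffAt_vf L a hyp).continuousAt.continuousWithinAt).sub
            ((hcont.mono (fun z hz => hclos hz)) y hy)
        · -- C² on sdom
          intro y hy
          have hyp : y ≠ p := hnep y (fun h2 => hy.1 (interior_subset h2))
          exact (contDiffAt_vf L a hyp).sub
            (hreg.contDiffAt (hKclosed.isOpen_compl.mem_nhds hy.1))
        · -- harmonic on sdom
          intro y hy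
          have hyp : y ≠ p := hnep y (fun h2 => hy.1 (interior_subset h2))
          rw [hw]
          rw [laplacian_sub (contDiffAt_vf L a hyp)
            (hreg.contDiffAt (hKclosed.isOpen_compl.mem_nhds hy.1))]
          rw [laplacian_vf p L a hyp, hharm y hy.1]
          ring
        · -- boundary bound
          intro y hyf
          have := frontier_inter_subset Kᶜ (Metric.ball (0:EuclideanSpace ℝ (Fin 3)) R)
          rcases this hyf with h1 | h2
          · -- on frontier K
            have hyK : y ∈ frontier K := by
              rw [← frontier_compl]; exact h1.1
            show v y - h y ≤ ε
            rw [hbdry y hyK]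
            have := hvfr y hyK
            linarith
          · -- on the sphere
            have hyfb : y ∈ frontier (Metric.ball (0:EuclideanSpace ℝ (Fin 3)) R) := h2.2
            rw [frontier_ball _ hRpos.ne'] at hyfb
            have hyC : y ∉ C := by
              intro hyC
              have := hKC (Set.mem_union_right _ hyC)
              rw [Metric.mem_ball] at this
              rw [Metric.mem_sphere] at hyfb
              linarith
            have := hCsub hyC
            have h3 : |v y - h y| < ε := this
            show v y - h y ≤ ε
            cases abs_lt.mp h3 with
            | intro h4 h5 => linarith
      -- conclude for x
      by_cases hxb : x ∈ Metric.ball (0:EuclideanSpace ℝ (Fin 3)) R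
      · have hxs : x ∈ sdom := ⟨hxK, hxb⟩
        have h6 : v x - h x ≤ ε := hmaxp x (subset_closure hxs)
        linarith
      · have hxC : x ∉ C := by
          intro hxC
          exact hxb (hKC (Set.mem_union_right _ hxC))
        have h3 : |v x - h x| < ε := hCsub hxC
        cases abs_lt.mp h3 with
        | intro h4 h5 => linarith
    intro x hxK
    by_contra hlt
    push_neg at hlt
    have := hstep ((v x - h x)/2) (by linarith) x hxK
    linarith
  -- pass to the limit
  have hvtend : Tendsto (fun x : EuclideanSpace ℝ (Fin 3) => ‖x‖ * (v x + L))
      (cocompact (EuclideanSpace ℝ (Fin 3))) (nhds a) := by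
    have h1 : Tendsto (fun y : EuclideanSpace ℝ (Fin 3) => a * (‖y‖ * ‖y - p‖⁻¹))
        (cocompact (EuclideanSpace ℝ (Fin 3))) (nhds (a * 1)) :=
      (tendsto_ratio p).const_mul a
    rw [mul_one] at h1
    apply h1.congr'
    filter_upwards [eventually_ne_cocompact p] with y hy
    rw [hv, vf_eq L a hy]
    ring
  have hev : ∀ᶠ x in cocompact (EuclideanSpace ℝ (Fin 3)),
      ‖x‖ * (v x + L) ≤ ‖x‖ * (h x + L) := by
    filter_upwards [hKcomp.compl_mem_cocompact] with y hy
    have := hcomp y hy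
    have hn : (0:ℝ) ≤ ‖y‖ := norm_nonneg _
    nlinarith
  have hac : a ≤ c := le_of_tendsto_of_tendsto hvtend hc hev
  linarith
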